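/- Let T be a truss and let N1, N2, N3 be pairwise compatible Nijenhuis operators on T. Then the map M : T → T defined by M(a) = [N1(a), N2(a), N3(a)] is a Nijenhuis operator on T: M is a heap endomorphism and M([M(a)b, M(ab), aM(b)]) = M(a)M(b) for all a,b ∈ T. -/

import Mathlib

/-!
Fixing a base point turns the abelian heap into an abelian group with `[x, y, z] = x - y + z`,
so that `M = N₁ - N₂ + N₃`. Both the Nijenhuis product of `M` and the product `M(a)M(b)` expand
into nine-term signed sums, the sign of the `(i, j)` term being `sᵢsⱼ` with `s = (+, -, +)`.
The diagonal terms match by the Nijenhuis identities of the `Nᵢ`, and each symmetric pair of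
off-diagonal terms, which carries a single sign, matches by the compatibility of `Nᵢ` and `Nⱼ`.
-/

/-- A truss: an abelian heap with an associative multiplication distributing
over the ternary heap operation on both sides. -/
class Truss (T : Type*) extends Mul T where
  hbr : T → T → T → T
  hbr_assoc : ∀ a b c d f : T, hbr (hbr a b c) d f = hbr a b (hbr c d f)
  hbr_idl : ∀ a b : T, hbr a a b = b
  hbr_idr : ∀ a b : T, hbr b a a = b
  hbr_comm : ∀ a b c : T, hbr a b c = hbr c b a
  mul_assoc' : ∀ a b c : T, a * b * c = a * (b * c)
  mul_hbr_left : ∀ a b c d : T, a * hbr b c d = hbr (a * b) (a * c) (a * d)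
  mul_hbr_right : ∀ a b c d : T, hbr b c d * a = hbr (b * a) (c * a) (d * a)

open Truss

variable {T : Type*} [Truss T]

/-- The Nijenhuis product `a ∘_N b = [N(a)b, N(ab), aN(b)]`. -/
def nijProd (N : T → T) (a b : T) : T :=
  hbr (N a * b) (N (a * b)) (a * N b)

/-- `N` is a heap endomorphism of the truss `T`. -/
def IsHeapEndo (N : T → T) : Prop :=
  ∀ a b c : T, N (hbr a b c) = hbr (N a) (N b) (N c)

/-- `N` is a Nijenhuis operator: a heap endomorphism with `N(a ∘_N b) = N(a)N(b)`. -/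
def IsNijenhuis (N : T → T) : Prop :=
  IsHeapEndo N ∧ ∀ a b : T, N (nijProd N a b) = N a * N b

/-- Compatibility of Nijenhuis operators:
`N₁(a)N₂(b) = [N₁(a ∘_{N₂} b), N₂(a)N₁(b), N₂(a ∘_{N₁} b)]`. -/
def AreCompatible (N₁ N₂ : T → T) : Prop :=
  ∀ a b : T,
    N₁ a * N₂ b = hbr (N₁ (nijProd N₂ a b)) (N₂ a * N₁ b) (N₂ (nijProd N₁ a b))

abbrev heapAddGroup (e : T) : AddCommGroup T :=
  letI : Zero T := ⟨e⟩
  letI : Add T := ⟨fun x y => hbr x e y⟩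
  letI : Neg T := ⟨fun x => hbr e x e⟩
  { add_assoc := fun x y z => hbr_assoc x e y e z
    zero_add := fun x => hbr_idl e x
    add_zero := fun x => hbr_idr e x
    add_comm := fun x y => hbr_comm x e y
    neg_add_cancel := fun x => by
      show hbr (hbr e x e) e x = e
      rw [hbr_assoc, hbr_idl, hbr_idr]
    nsmul := nsmulRec
    zsmul := zsmulRec }

theorem hbr_eq_sub_add (e x y z : T) :
    letI := heapAddGroup e
    hbr x y z = x - y + z := by
  show hbr x y z = hbr (hbr x e (hbr e y e)) e z
  rw [hbr_assoc, hbr_assoc, hbr_idl, ← hbr_assoc, hbr_idr]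

theorem hbr_medial (x₁ x₂ x₃ y₁ y₂ y₃ z₁ z₂ z₃ : T) :
    hbr (hbr x₁ x₂ x₃) (hbr y₁ y₂ y₃) (hbr z₁ z₂ z₃) =
      hbr (hbr x₁ y₁ z₁) (hbr x₂ y₂ z₂) (hbr x₃ y₃ z₃) := by
  let := heapAddGroup x₁
  simp only [hbr_eq_sub_add x₁]
  abel

theorem hbr_mul_hbr (a b c x y z : T) :
    hbr a b c * hbr x y z =
      hbr (hbr (a * x) (a * y) (a * z)) (hbr (b * x) (b * y) (b * z))
        (hbr (c * x) (c * y) (c * z)) := by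
  rw [mul_hbr_right, mul_hbr_left, mul_hbr_left, mul_hbr_left]

theorem IsHeapEndo.hbr {N₁ N₂ N₃ : T → T} (h₁ : IsHeapEndo N₁) (h₂ : IsHeapEndo N₂)
    (h₃ : IsHeapEndo N₃) : IsHeapEndo fun a => hbr (N₁ a) (N₂ a) (N₃ a) := by
  intro a b c
  simp only [h₁ a b c, h₂ a b c, h₃ a b c]
  exact hbr_medial ..

theorem nijProd_hbr (N₁ N₂ N₃ : T → T) (a b : T) :
    nijProd (fun a => hbr (N₁ a) (N₂ a) (N₃ a)) a b =
      hbr (nijProd N₁ a b) (nijProd N₂ a b) (nijProd N₃ a b) := by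
  simp only [nijProd, mul_hbr_left, mul_hbr_right]
  exact hbr_medial ..

theorem IsNijenhuis.hbr {N₁ N₂ N₃ : T → T}
    (h₁ : IsNijenhuis N₁) (h₂ : IsNijenhuis N₂) (h₃ : IsNijenhuis N₃)
    (h₁₂ : AreCompatible N₁ N₂) (h₁₃ : AreCompatible N₁ N₃) (h₂₃ : AreCompatible N₂ N₃) :
    IsNijenhuis fun a => hbr (N₁ a) (N₂ a) (N₃ a) := by
  refine ⟨h₁.1.hbr h₂.1 h₃.1, fun a b => ?_⟩
  rw [nijProd_hbr]
  beta_reduce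
  rw [h₁.1, h₂.1, h₃.1, h₁.2, h₂.2, h₃.2, hbr_mul_hbr, h₁₂, h₁₃, h₂₃]
  let := heapAddGroup a
  simp only [hbr_eq_sub_add a]
  abel

/-- Let `N₁, N₂, N₃` be pairwise compatible Nijenhuis operators on a
truss `T`. Then `M(a) = [N₁(a), N₂(a), N₃(a)]` is a Nijenhuis operator on `T`: `M` is a
heap endomorphism and `M([M(a)b, M(ab), aM(b)]) = M(a)M(b)` for all `a, b ∈ T`. -/
theorem heap_bracket_of_compatible_nijenhuis (T : Type*) [Truss T] (N₁ N₂ N₃ : T → T)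
    (h₁ : IsNijenhuis N₁) (h₂ : IsNijenhuis N₂) (h₃ : IsNijenhuis N₃)
    (h₁₂ : AreCompatible N₁ N₂) (h₁₃ : AreCompatible N₁ N₃)
    (h₂₃ : AreCompatible N₂ N₃) :
    letI M : T → T := fun a => hbr (N₁ a) (N₂ a) (N₃ a)
    IsHeapEndo M ∧
      ∀ a b : T, M (hbr (M a * b) (M (a * b)) (a * M b)) = M a * M b :=
  IsNijenhuis.hbr h₁ h₂ h₃ h₁₂ h₁₃ h₂₃
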